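/- Let k > 0 with k ∉ {i²j²π⁴ : i, j integers, 1 ≤ i < j}, and let β < −β_c(k). Then the set of solutions of the stationary beam problem with f = 0 is exactly {0} ∪ {u_n^+, u_n^− : n ≥ 1 with β + μ_n(k) < 0}, where u_n^±(x) = ±(1/(nπ))·√(−2(β + μ_n(k)))·sin(nπx). In particular, the stationary problem has exactly 2·n⋆(β) + 1 solutions, where n⋆(β) is the (finite) number of integers n ≥ 1 with β + μ_n(k) < 0. -/

import Mathlib

open Real Set

/-- `μ_n(k) = k/(n²π²) + n²π²`. -/
noncomputable def mu (k : ℝ) (n : ℕ) : ℝ := k / ((n : ℝ)^2 * π^2) + (n : ℝ)^2 * π^2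

/-- `β_c(k) = min_{n ≥ 1} μ_n(k)`. -/
noncomputable def betaC (k : ℝ) : ℝ := sInf {x : ℝ | ∃ n : ℕ, 1 ≤ n ∧ x = mu k n}

/-- `u` is a solution of the stationary beam problem with `f = 0`:
`u ∈ C⁴([0,1])`, `u'''' - (β + ∫₀¹ u'(ξ)² dξ) u'' + k u = 0` on `[0,1]`,
with hinged boundary conditions. -/
def IsStatSol (k β : ℝ) (u : ℝ → ℝ) : Prop :=
  ContDiffOn ℝ 4 u (Icc (0:ℝ) 1) ∧
  (∀ x ∈ Icc (0:ℝ) 1,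
    iteratedDerivWithin 4 u (Icc (0:ℝ) 1) x
      - (β + ∫ ξ in (0:ℝ)..1, (iteratedDerivWithin 1 u (Icc (0:ℝ) 1) ξ)^2)
        * iteratedDerivWithin 2 u (Icc (0:ℝ) 1) x
      + k * u x = 0) ∧
  u 0 = 0 ∧ u 1 = 0 ∧
  iteratedDerivWithin 2 u (Icc (0:ℝ) 1) 0 = 0 ∧
  iteratedDerivWithin 2 u (Icc (0:ℝ) 1) 1 = 0

/-- The buckled mode `u_n^+`. -/
noncomputable def upos (k β : ℝ) (n : ℕ) : ℝ → ℝ :=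
  fun x => (1/((n : ℝ)*π)) * Real.sqrt (-2*(β + mu k n)) * Real.sin ((n : ℝ)*π*x)

/-- The buckled mode `u_n^-`. -/
noncomputable def uneg (k β : ℝ) (n : ℕ) : ℝ → ℝ :=
  fun x => -(1/((n : ℝ)*π)) * Real.sqrt (-2*(β + mu k n)) * Real.sin ((n : ℝ)*π*x)

/-!
The nonlocal coefficient `q = β + ∫₀¹ u'²` of a solution is a constant, so `u` solves the linear
hinged problem `u'''' - q u'' + k u = 0`. Factor `z² - q z + k = (z - c₁)(z - c₂)` over `ℂ`:
then `u'' - c₂ u` solves the Dirichlet problem for `w'' = c₁ w`, whose only nonzero solutions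
are `sin (mπx)` with `c₁ = -(mπ)²`, and symmetrically. Non-resonance of `k` excludes two distinct
modes, and a double root `c₁ = c₂ = -(mπ)²` is excluded by resonance, so `u` is a multiple of a
single mode `sin (nπx)`. Plugging such a mode into the equation gives its amplitude
`(c n π)² = -2 (β + μₙ(k))`.
-/

theorem integral_sin_sq_nat_mul_pi {m : ℕ} (hm : m ≠ 0) :
    ∫ x in (0 : ℝ)..1, sin (m * π * x) ^ 2 = 1 / 2 := by
  have hm' : (m : ℝ) ≠ 0 := Nat.cast_ne_zero.mpr hm
  rw [intervalIntegral.integral_comp_mul_left (fun y => sin y ^ 2) (by positivity), integral_sin_sq]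
  simp only [smul_eq_mul, mul_zero, mul_one, sin_zero, sin_nat_mul_pi, zero_mul, zero_add, sub_zero]
  field_simp

theorem integral_cos_sq_nat_mul_pi {m : ℕ} (hm : m ≠ 0) :
    ∫ x in (0 : ℝ)..1, cos (m * π * x) ^ 2 = 1 / 2 := by
  have hm' : (m : ℝ) ≠ 0 := Nat.cast_ne_zero.mpr hm
  rw [intervalIntegral.integral_comp_mul_left (fun y => cos y ^ 2) (by positivity), integral_cos_sq]
  simp only [smul_eq_mul, mul_zero, mul_one, sin_zero, sin_nat_mul_pi, zero_add, sub_zero]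
  field_simp

theorem hasDerivAt_ccosh_mul (σ : ℂ) (x : ℝ) :
    HasDerivAt (fun y : ℝ => Complex.cosh (σ * y)) (σ * Complex.sinh (σ * x)) x := by
  simpa [mul_comm] using (((hasDerivAt_id (x : ℂ)).const_mul σ).ccosh).comp_ofReal

theorem hasDerivAt_csinh_mul (σ : ℂ) (x : ℝ) :
    HasDerivAt (fun y : ℝ => Complex.sinh (σ * y)) (σ * Complex.cosh (σ * x)) x := by
  simpa [mul_comm] using (((hasDerivAt_id (x : ℂ)).const_mul σ).csinh).comp_ofReal

section SecondOrder

variable {T : ℝ} {w w' : ℝ → ℂ}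

theorem eqOn_zero_of_second_order_of_initial_eq_zero (c : ℂ)
    (hw : ∀ x ∈ Icc 0 T, HasDerivWithinAt w (w' x) (Icc 0 T) x)
    (hw' : ∀ x ∈ Icc 0 T, HasDerivWithinAt w' (c * w x) (Icc 0 T) x)
    (h₀ : w 0 = 0) (h₀' : w' 0 = 0) : EqOn w 0 (Icc 0 T) := by
  let L : ℂ × ℂ →L[ℝ] ℂ × ℂ :=
    (ContinuousLinearMap.snd ℝ ℂ ℂ).prod (c • (ContinuousLinearMap.fst ℝ ℂ ℂ).restrictScalars ℝ)
  have hsys : EqOn (fun x => (w x, w' x)) 0 (Icc 0 T) := by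
    refine ODE_solution_unique_of_mem_Icc_right (v := fun _ => L) (s := fun _ => univ)
      (fun _ _ => L.lipschitz.lipschitzOnWith) ?_ (fun x hx => ?_) (fun _ _ => mem_univ _)
      continuousOn_const (fun _ _ => ?_) (fun _ _ => mem_univ _) (by simp [h₀, h₀'])
    · exact fun x hx => (hw x hx).continuousWithinAt.prodMk (hw' x hx).continuousWithinAt
    · have hx' := Ico_subset_Icc_self hx
      exact ((hw x hx').prodMk (hw' x hx')).mono_of_mem_nhdsWithin (Icc_mem_nhdsGE_of_mem hx)
    · rw [Pi.zero_apply, map_zero]; exact hasDerivWithinAt_const _ _ _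
  exact fun x hx => congrArg Prod.fst (hsys hx)

theorem eqOn_cosh_sinh_of_hasDerivWithinAt {σ : ℂ} (hσ : σ ≠ 0)
    (hw : ∀ x ∈ Icc 0 T, HasDerivWithinAt w (w' x) (Icc 0 T) x)
    (hw' : ∀ x ∈ Icc 0 T, HasDerivWithinAt w' (σ ^ 2 * w x) (Icc 0 T) x) :
    ∀ x ∈ Icc 0 T, w x = w 0 * Complex.cosh (σ * x) + w' 0 / σ * Complex.sinh (σ * x) := by
  set g : ℝ → ℂ := fun x => w 0 * Complex.cosh (σ * x) + w' 0 / σ * Complex.sinh (σ * x)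
  set g' : ℝ → ℂ := fun x => w 0 * σ * Complex.sinh (σ * x) + w' 0 * Complex.cosh (σ * x)
  have hg (x : ℝ) : HasDerivAt g (g' x) x := by
    refine (((hasDerivAt_ccosh_mul σ x).const_mul (w 0)).add
      ((hasDerivAt_csinh_mul σ x).const_mul (w' 0 / σ))).congr_deriv ?_
    simp only [g']
    field_simp
  have hg' (x : ℝ) : HasDerivAt g' (σ ^ 2 * g x) x := by
    refine (((hasDerivAt_csinh_mul σ x).const_mul (w 0 * σ)).add
      ((hasDerivAt_ccosh_mul σ x).const_mul (w' 0))).congr_deriv ?_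
    simp only [g]
    field_simp
  have hdiff := eqOn_zero_of_second_order_of_initial_eq_zero (w := w - g) (w' := w' - g') (σ ^ 2)
    (fun x hx => (hw x hx).sub (hg x).hasDerivWithinAt)
    (fun x hx => by simpa [mul_sub] using (hw' x hx).sub (hg' x).hasDerivWithinAt)
    (by simp [g]) (by simp [g'])
  exact fun x hx => sub_eq_zero.mp (hdiff hx)

end SecondOrder

theorem exists_sinh_mul_eq_sin_of_sinh_eq_zero {σ : ℂ} (hσ : σ ≠ 0) (h : Complex.sinh σ = 0) :
    ∃ m : ℕ, m ≠ 0 ∧ σ ^ 2 = -((m : ℂ) * π) ^ 2 ∧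
      ∃ ε : ℂ, ∀ x : ℝ, Complex.sinh (σ * x) = ε * Real.sin (m * π * x) := by
  obtain ⟨j, hj⟩ := Complex.sin_eq_zero_iff.mp
    (by simp [Complex.sin_mul_I, h] : Complex.sin (σ * Complex.I) = 0)
  have hσj : σ = -(j * π) * Complex.I := by linear_combination (-Complex.I) * hj + σ * Complex.I_sq
  have hsinh (x : ℝ) : Complex.sinh (σ * x) = Complex.sin (-(j * π * x)) * Complex.I := by
    rw [← Complex.sinh_mul_I, hσj]; ring_nf
  obtain ⟨m, rfl | rfl⟩ := Int.eq_nat_or_neg j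
  · have hm : m ≠ 0 := by rintro rfl; simp_all
    refine ⟨m, hm, ?_, -Complex.I, fun x => ?_⟩
    · rw [hσj]; push_cast; linear_combination ((m : ℂ) * π) ^ 2 * Complex.I_sq
    · rw [hsinh, Complex.sin_neg]; push_cast; ring
  · have hm : m ≠ 0 := by rintro rfl; simp_all
    refine ⟨m, hm, ?_, Complex.I, fun x => ?_⟩
    · rw [hσj]; push_cast; linear_combination ((m : ℂ) * π) ^ 2 * Complex.I_sq
    · rw [hsinh]; push_cast; ring_nf

theorem eqOn_zero_or_sin_of_dirichlet {c : ℂ} (hc : c ≠ 0) {w w' : ℝ → ℂ}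
    (hw : ∀ x ∈ Icc 0 1, HasDerivWithinAt w (w' x) (Icc 0 1) x)
    (hw' : ∀ x ∈ Icc 0 1, HasDerivWithinAt w' (c * w x) (Icc 0 1) x)
    (h₀ : w 0 = 0) (h₁ : w 1 = 0) :
    EqOn w 0 (Icc 0 1) ∨ ∃ m : ℕ, m ≠ 0 ∧ c = -((m : ℂ) * π) ^ 2 ∧
      ∃ C : ℂ, ∀ x ∈ Icc (0 : ℝ) 1, w x = C * Real.sin (m * π * x) := by
  obtain ⟨σ, rfl⟩ := IsAlgClosed.exists_pow_nat_eq c two_pos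
  have hσ : σ ≠ 0 := by rintro rfl; simp_all
  have hrep := eqOn_cosh_sinh_of_hasDerivWithinAt hσ hw hw'
  simp only [h₀, zero_mul, zero_add] at hrep
  by_cases hw'0 : w' 0 = 0
  · left
    intro x hx
    simp [hrep x hx, hw'0]
  have hsinh : Complex.sinh σ = 0 := by simpa [h₁, hσ, hw'0] using (hrep 1 (by simp)).symm
  obtain ⟨m, hm, hσm, ε, hε⟩ := exists_sinh_mul_eq_sin_of_sinh_eq_zero hσ hsinh
  exact Or.inr ⟨m, hm, hσm, w' 0 / σ * ε, fun x hx => by rw [hrep x hx, hε]; ring⟩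

theorem forcing_eq_zero_of_resonance {m : ℕ} (hm : m ≠ 0) {C : ℂ} {w w' : ℝ → ℂ}
    (hw : ∀ x ∈ Icc 0 1, HasDerivWithinAt w (w' x) (Icc 0 1) x)
    (hw' : ∀ x ∈ Icc 0 1,
      HasDerivWithinAt w' (-((m : ℂ) * π) ^ 2 * w x + C * Real.sin (m * π * x)) (Icc 0 1) x)
    (h₀ : w 0 = 0) (h₁ : w 1 = 0) : C = 0 := by
  set a : ℝ := m * π
  -- the Wronskian of `w` and `sin (a x)` has derivative `C sin² (a x)` and vanishes at `0` and `1`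
  set W : ℝ → ℂ := fun x => w' x * Real.sin (a * x) - w x * (a * Real.cos (a * x))
  have hW : ∀ x ∈ Icc (0 : ℝ) 1,
      HasDerivWithinAt W (C * (Real.sin (a * x) : ℂ) ^ 2) (Icc 0 1) x := by
    intro x hx
    have hs := ((hasDerivAt_id' x).const_mul a).sin.ofReal_comp
    have hc := ((hasDerivAt_id' x).const_mul a).cos.ofReal_comp.const_mul (a : ℂ)
    refine (((hw' x hx).mul hs.hasDerivWithinAt).sub
      ((hw x hx).mul hc.hasDerivWithinAt)).congr_deriv ?_
    simp only [a]
    push_cast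
    ring
  have hint : ∫ x in (0 : ℝ)..1, C * (Real.sin (a * x) : ℂ) ^ 2 = W 1 - W 0 :=
    intervalIntegral.integral_eq_sub_of_hasDerivAt_of_le zero_le_one
      (fun x hx => (hW x hx).continuousWithinAt)
      (fun x hx => (hW x (Ioo_subset_Icc_self hx)).hasDerivAt (Icc_mem_nhds hx.1 hx.2))
      (Continuous.intervalIntegrable (by fun_prop) 0 1)
  have hsq : ∫ x in (0 : ℝ)..1, C * (Real.sin (a * x) : ℂ) ^ 2 = C / 2 := by
    simp_rw [← Complex.ofReal_pow, intervalIntegral.integral_const_mul,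
      intervalIntegral.integral_ofReal, a, integral_sin_sq_nat_mul_pi hm]
    push_cast
    ring
  have hW0 : W 1 - W 0 = 0 := by simp [W, a, h₀, h₁, -Complex.ofReal_sin, sin_nat_mul_pi]
  simpa using hsq.symm.trans (hint.trans hW0)

section Hinged

variable {q k : ℂ} {u u₁ u₂ u₃ u₄ : ℝ → ℂ}
  (hu : ∀ x ∈ Icc 0 1, HasDerivWithinAt u (u₁ x) (Icc 0 1) x)
  (hu₁ : ∀ x ∈ Icc 0 1, HasDerivWithinAt u₁ (u₂ x) (Icc 0 1) x)
  (hu₂ : ∀ x ∈ Icc 0 1, HasDerivWithinAt u₂ (u₃ x) (Icc 0 1) x)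
  (hu₃ : ∀ x ∈ Icc 0 1, HasDerivWithinAt u₃ (u₄ x) (Icc 0 1) x)
  (hode : ∀ x ∈ Icc 0 1, u₄ x = q * u₂ x - k * u x)
  (h₀ : u 0 = 0) (h₁ : u 1 = 0) (h₀'' : u₂ 0 = 0) (h₁'' : u₂ 1 = 0)
include hu hu₁ hu₂ hu₃ hode h₀ h₁ h₀'' h₁''

/-- `∂⁴ - q ∂² + k = (∂² - c)(∂² - c')`, so `u'' - c' u` solves a Dirichlet problem for `∂² - c`. -/
theorem eqOn_zero_or_sin_of_hinged_factor {c c' : ℂ} (hc : c ≠ 0) (hsum : c + c' = q)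
    (hprod : c * c' = k) :
    EqOn (fun x => u₂ x - c' * u x) 0 (Icc 0 1) ∨ ∃ m : ℕ, m ≠ 0 ∧ c = -((m : ℂ) * π) ^ 2 ∧
      ∃ C : ℂ, ∀ x ∈ Icc (0 : ℝ) 1, u₂ x - c' * u x = C * Real.sin (m * π * x) := by
  refine eqOn_zero_or_sin_of_dirichlet hc (w' := fun x => u₃ x - c' * u₁ x)
    (fun x hx => (hu₂ x hx).sub ((hu x hx).const_mul c'))
    (fun x hx => ((hu₃ x hx).sub ((hu₁ x hx).const_mul c')).congr_deriv ?_)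
    (by simp [h₀, h₀'']) (by simp [h₁, h₁''])
  rw [hode x hx, ← hsum, ← hprod]
  ring

theorem eqOn_zero_or_sin_of_hinged (hk : k ≠ 0)
    (hres : ∀ i j : ℕ, 1 ≤ i → i < j → k ≠ (i : ℂ) ^ 2 * (j : ℂ) ^ 2 * π ^ 4) :
    EqOn u 0 (Icc 0 1) ∨
      ∃ n : ℕ, n ≠ 0 ∧ ∃ C : ℂ, ∀ x ∈ Icc (0 : ℝ) 1, u x = C * Real.sin (n * π * x) := by
  obtain ⟨d, hd⟩ := IsAlgClosed.exists_pow_nat_eq (q ^ 2 - 4 * k) two_pos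
  set c₁ := (q + d) / 2
  set c₂ := (q - d) / 2
  have hsum : c₁ + c₂ = q := by ring
  have hprod : c₁ * c₂ = k := by linear_combination -hd / 4
  have hc₁ : c₁ ≠ 0 := by rintro h; simp [h, eq_comm, hk] at hprod
  have hc₂ : c₂ ≠ 0 := by rintro h; simp [h, eq_comm, hk] at hprod
  have of_second_order : ∀ c ≠ (0 : ℂ), (∀ x ∈ Icc (0 : ℝ) 1, u₂ x - c * u x = 0) →
      EqOn u 0 (Icc 0 1) ∨
        ∃ n : ℕ, n ≠ 0 ∧ ∃ C : ℂ, ∀ x ∈ Icc (0 : ℝ) 1, u x = C * Real.sin (n * π * x) := by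
    intro c hc h
    refine (eqOn_zero_or_sin_of_dirichlet hc hu (fun x hx => (hu₁ x hx).congr_deriv ?_) h₀
      h₁).imp_right ?_
    · linear_combination h x hx
    · rintro ⟨n, hn, -, hC⟩
      exact ⟨n, hn, hC⟩
  rcases eqOn_zero_or_sin_of_hinged_factor hu hu₁ hu₂ hu₃ hode h₀ h₁ h₀'' h₁'' hc₁ hsum hprod with
    h₂ | ⟨i, hi, hc₁i, C, hC⟩
  · exact of_second_order c₂ hc₂ h₂
  rcases eqOn_zero_or_sin_of_hinged_factor hu hu₁ hu₂ hu₃ hode h₀ h₁ h₀'' h₁'' hc₂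
    (by rw [add_comm, hsum]) (by rw [mul_comm, hprod]) with h₁ | ⟨j, hj, hc₂j, -, -⟩
  · exact of_second_order c₁ hc₁ h₁
  obtain rfl : i = j := by
    by_contra hij
    have hk' : k = (i : ℂ) ^ 2 * (j : ℂ) ^ 2 * π ^ 4 := by rw [← hprod, hc₁i, hc₂j]; ring
    rcases Nat.lt_or_gt_of_ne hij with hlt | hlt
    · exact hres i j (by omega) hlt hk'
    · exact hres j i (by omega) hlt (by rw [hk']; ring)
  -- a double root: `u'' + (iπ)² u = C sin (iπx)` is resonant, which forces `C = 0`
  have hC0 : C = 0 := forcing_eq_zero_of_resonance hi hu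
    (fun x hx => (hu₁ x hx).congr_deriv (by linear_combination hC x hx + u x * hc₂j)) h₀ h₁
  exact of_second_order c₂ hc₂ fun x hx => by rw [hC x hx, hC0, zero_mul]

end Hinged

theorem ContDiffOn.hasDerivWithinAt_iteratedDerivWithin {𝕜 F : Type*} [NontriviallyNormedField 𝕜]
    [NormedAddCommGroup F] [NormedSpace 𝕜 F] {f : 𝕜 → F} {s : Set 𝕜} {n : WithTop ℕ∞} {m : ℕ}
    (h : ContDiffOn 𝕜 n f s) (hm : m < n) (hs : UniqueDiffOn 𝕜 s) {x : 𝕜} (hx : x ∈ s) :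
    HasDerivWithinAt (iteratedDerivWithin m f s) (iteratedDerivWithin (m + 1) f s x) s x := by
  rw [iteratedDerivWithin_succ]
  exact (h.differentiableOn_iteratedDerivWithin hm hs x hx).hasDerivWithinAt

noncomputable def sineMode (c : ℝ) (n : ℕ) (x : ℝ) : ℝ := c * sin (n * π * x)

theorem iteratedDerivWithin_sineMode (c : ℝ) (n m : ℕ) {x : ℝ} (hx : x ∈ Icc (0 : ℝ) 1) :
    iteratedDerivWithin m (sineMode c n) (Icc 0 1) x =
      c * (n * π) ^ m * iteratedDeriv m sin (n * π * x) := by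
  rw [iteratedDerivWithin_eq_iteratedDeriv uniqueDiffOn_Icc_zero_one
    (by unfold sineMode; fun_prop) hx, show sineMode c n = fun x => c * sin (n * π * x) from rfl,
    iteratedDeriv_const_mul_field, iteratedDeriv_comp_const_mul contDiff_sin, mul_assoc]

theorem integral_sq_iteratedDerivWithin_one_sineMode (c : ℝ) {n : ℕ} (hn : n ≠ 0) :
    ∫ ξ in (0 : ℝ)..1, (iteratedDerivWithin 1 (sineMode c n) (Icc 0 1) ξ) ^ 2 =
      (c * (n * π)) ^ 2 / 2 := by
  rw [intervalIntegral.integral_congr (g := fun ξ => (c * (n * π)) ^ 2 * cos (n * π * ξ) ^ 2),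
    intervalIntegral.integral_const_mul, integral_cos_sq_nat_mul_pi hn]
  · ring
  intro ξ hξ
  rw [uIcc_of_le zero_le_one] at hξ
  simp [iteratedDerivWithin_sineMode c n 1 hξ, mul_pow]

theorem isStatSol_sineMode_iff {k β c : ℝ} {n : ℕ} (hn : n ≠ 0) :
    IsStatSol k β (sineMode c n) ↔ c = 0 ∨ (c * (n * π)) ^ 2 = -2 * (β + mu k n) := by
  have hnπ : (n : ℝ) * π ≠ 0 := by positivity
  have hresidual : ∀ x ∈ Icc (0 : ℝ) 1,
      iteratedDerivWithin 4 (sineMode c n) (Icc 0 1) x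
        - (β + ∫ ξ in (0 : ℝ)..1, (iteratedDerivWithin 1 (sineMode c n) (Icc 0 1) ξ) ^ 2)
          * iteratedDerivWithin 2 (sineMode c n) (Icc 0 1) x + k * sineMode c n x =
      c * (n * π) ^ 2 * (β + (c * (n * π)) ^ 2 / 2 + mu k n) * sin (n * π * x) := by
    intro x hx
    simp only [iteratedDerivWithin_sineMode c n _ hx,
      integral_sq_iteratedDerivWithin_one_sineMode c hn, sineMode, mu]
    simp [iteratedDeriv_succ]
    field_simp
    ring
  constructor
  · rintro ⟨-, hode, -⟩
    -- evaluate the equation where `sin (nπx) = 1`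
    have hx : 1 / (2 * (n : ℝ)) ∈ Icc (0 : ℝ) 1 := by
      have : (1 : ℝ) ≤ n := Nat.one_le_cast.mpr (Nat.one_le_iff_ne_zero.mpr hn)
      constructor <;> [positivity; (rw [div_le_one (by positivity)]; linarith)]
    have h := (hresidual _ hx).symm.trans (hode _ hx)
    rw [show (n : ℝ) * π * (1 / (2 * n)) = π / 2 by field_simp, sin_pi_div_two, mul_one] at h
    rcases mul_eq_zero.mp h with h | h
    · exact Or.inl (by simpa [hnπ] using h)
    · exact Or.inr (by linarith)
  · intro h
    refine ⟨by unfold sineMode; fun_prop, fun x hx => ?_, by simp [sineMode], by simp [sineMode],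
      ?_, ?_⟩
    · rw [hresidual x hx]
      rcases h with rfl | h
      · simp
      · rw [show β + (c * (n * π)) ^ 2 / 2 + mu k n = 0 by linarith]; simp
    · simp [iteratedDerivWithin_sineMode c n 2 (by simp : (0 : ℝ) ∈ Icc 0 1)]
    · simp [iteratedDerivWithin_sineMode c n 2 (by simp : (1 : ℝ) ∈ Icc 0 1), sin_nat_mul_pi]

theorem IsStatSol.congr {k β : ℝ} {u v : ℝ → ℝ} (h : IsStatSol k β v) (huv : EqOn u v (Icc 0 1)) :
    IsStatSol k β u := by
  obtain ⟨hcd, hode, h₀, h₁, h₀'', h₁''⟩ := h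
  have hD (m : ℕ) : EqOn (iteratedDerivWithin m u (Icc 0 1)) (iteratedDerivWithin m v (Icc 0 1))
      (Icc 0 1) := fun x hx => iteratedDerivWithin_congr huv hx
  have hE : ∫ ξ in (0 : ℝ)..1, (iteratedDerivWithin 1 u (Icc 0 1) ξ) ^ 2 =
      ∫ ξ in (0 : ℝ)..1, (iteratedDerivWithin 1 v (Icc 0 1) ξ) ^ 2 :=
    intervalIntegral.integral_congr fun ξ hξ => by
      rw [uIcc_of_le zero_le_one] at hξ
      simp only [hD 1 hξ]
  refine ⟨hcd.congr huv, fun x hx => ?_, (huv (by simp)).trans h₀, (huv (by simp)).trans h₁,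
    (hD 2 (by simp)).trans h₀'', (hD 2 (by simp)).trans h₁''⟩
  rw [hD 4 hx, hD 2 hx, huv hx, hE]
  exact hode x hx

theorem isStatSol_congr {k β : ℝ} {u v : ℝ → ℝ} (huv : EqOn u v (Icc 0 1)) :
    IsStatSol k β u ↔ IsStatSol k β v :=
  ⟨fun h => h.congr huv.symm, fun h => h.congr huv⟩

theorem IsStatSol.eqOn_zero_or_sineMode {k β : ℝ} {u : ℝ → ℝ} (h : IsStatSol k β u) (hk : k ≠ 0)
    (hres : ∀ i j : ℕ, 1 ≤ i → i < j → k ≠ (i : ℝ) ^ 2 * (j : ℝ) ^ 2 * π ^ 4) :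
    EqOn u 0 (Icc 0 1) ∨ ∃ n : ℕ, n ≠ 0 ∧ ∃ c : ℝ, EqOn u (sineMode c n) (Icc 0 1) := by
  obtain ⟨hcd, hode, h₀, h₁, h₀'', h₁''⟩ := h
  set D : ℕ → ℝ → ℂ := fun m x => ((iteratedDerivWithin m u (Icc 0 1) x : ℝ) : ℂ)
  have hD (m : ℕ) (hm : m < 4) (x : ℝ) (hx : x ∈ Icc (0 : ℝ) 1) :
      HasDerivWithinAt (D m) (D (m + 1) x) (Icc 0 1) x :=
    (hcd.hasDerivWithinAt_iteratedDerivWithin (by exact_mod_cast hm) uniqueDiffOn_Icc_zero_one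
      hx).ofReal_comp
  have hD0 : D 0 = fun x => (u x : ℂ) := by simp [D]
  set q := β + ∫ ξ in (0 : ℝ)..1, (iteratedDerivWithin 1 u (Icc 0 1) ξ) ^ 2
  have hode' (x : ℝ) (hx : x ∈ Icc (0 : ℝ) 1) : D 4 x = q * D 2 x - k * D 0 x := by
    simp only [D, iteratedDerivWithin_zero]
    exact_mod_cast (by linarith [hode x hx])
  rcases eqOn_zero_or_sin_of_hinged (hD 0 (by norm_num)) (hD 1 (by norm_num))
    (hD 2 (by norm_num)) (hD 3 (by norm_num)) hode'
    (by simp [hD0, h₀]) (by simp [hD0, h₁]) (by simp [D, h₀'']) (by simp [D, h₁''])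
    (by exact_mod_cast hk) (fun i j hi hij hk' => hres i j hi hij (by exact_mod_cast hk')) with
    h | ⟨n, hn, C, hC⟩
  · left
    intro x hx
    simpa [hD0] using h hx
  · refine Or.inr ⟨n, hn, C.re, fun x hx => ?_⟩
    simpa only [hD0, sineMode, Complex.ofReal_re, Complex.re_mul_ofReal] using
      congrArg Complex.re (hC x hx)

theorem sineMode_eq_upos_or_uneg {k β c : ℝ} {n : ℕ} (hn : n ≠ 0) (hc : c ≠ 0)
    (h : (c * (n * π)) ^ 2 = -2 * (β + mu k n)) :
    β + mu k n < 0 ∧ (sineMode c n = upos k β n ∨ sineMode c n = uneg k β n) := by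
  have hnπ : 0 < (n : ℝ) * π := by positivity
  refine ⟨by nlinarith [pow_pos (abs_pos.mpr (mul_ne_zero hc hnπ.ne')) 2, sq_abs (c * (n * π))], ?_⟩
  have hs : √(-2 * (β + mu k n)) = |c * (n * π)| := by rw [← h, sqrt_sq_eq_abs]
  rcases abs_choice (c * (n * π)) with habs | habs
  · left
    funext x
    simp only [sineMode, upos, hs, habs]
    field_simp
  · right
    funext x
    simp only [sineMode, uneg, hs, habs]
    field_simp

theorem isStatSol_upos {k β : ℝ} {n : ℕ} (hn : n ≠ 0) (h : β + mu k n < 0) :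
    IsStatSol k β (upos k β n) := by
  have hnπ : 0 < (n : ℝ) * π := by positivity
  refine (isStatSol_sineMode_iff (c := 1 / (n * π) * √(-2 * (β + mu k n))) hn).mpr (Or.inr ?_)
  rw [show 1 / (n * π) * √(-2 * (β + mu k n)) * (n * π) = √(-2 * (β + mu k n)) by field_simp,
    sq_sqrt (by linarith)]

theorem isStatSol_uneg {k β : ℝ} {n : ℕ} (hn : n ≠ 0) (h : β + mu k n < 0) :
    IsStatSol k β (uneg k β n) := by
  have hnπ : 0 < (n : ℝ) * π := by positivity
  refine (isStatSol_sineMode_iff (c := -(1 / (n * π)) * √(-2 * (β + mu k n))) hn).mpr (Or.inr ?_)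
  rw [show -(1 / (n * π)) * √(-2 * (β + mu k n)) * (n * π) = -√(-2 * (β + mu k n)) by field_simp,
    neg_sq, sq_sqrt (by linarith)]

theorem isStatSol_zero (k β : ℝ) : IsStatSol k β 0 :=
  (isStatSol_congr fun x _ => by simp [sineMode]).mpr
    ((isStatSol_sineMode_iff (c := 0) one_ne_zero).mpr (Or.inl rfl))

theorem isStatSol_iff {k β : ℝ} (hk : k ≠ 0)
    (hres : ∀ i j : ℕ, 1 ≤ i → i < j → k ≠ (i : ℝ) ^ 2 * (j : ℝ) ^ 2 * π ^ 4) (u : ℝ → ℝ) :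
    IsStatSol k β u ↔ EqOn u 0 (Icc 0 1) ∨ ∃ n : ℕ, 1 ≤ n ∧ β + mu k n < 0 ∧
      (EqOn u (upos k β n) (Icc 0 1) ∨ EqOn u (uneg k β n) (Icc 0 1)) := by
  constructor
  · intro h
    rcases h.eqOn_zero_or_sineMode hk hres with h0 | ⟨n, hn, c, hc⟩
    · exact Or.inl h0
    by_cases hc0 : c = 0
    · exact Or.inl fun x hx => by simp [hc hx, sineMode, hc0]
    have hamp := ((isStatSol_sineMode_iff hn).mp ((isStatSol_congr hc).mp h)).resolve_left hc0
    obtain ⟨hneg, hmode | hmode⟩ := sineMode_eq_upos_or_uneg hn hc0 hamp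
    · exact Or.inr ⟨n, by omega, hneg, Or.inl (hmode ▸ hc)⟩
    · exact Or.inr ⟨n, by omega, hneg, Or.inr (hmode ▸ hc)⟩
  · rintro (h | ⟨n, hn, hneg, h | h⟩)
    · exact (isStatSol_congr h).mpr (isStatSol_zero k β)
    · exact (isStatSol_congr h).mpr (isStatSol_upos (by omega) hneg)
    · exact (isStatSol_congr h).mpr (isStatSol_uneg (by omega) hneg)

theorem mu_sub_mu (k : ℝ) {n m : ℕ} (hn : n ≠ 0) (hm : m ≠ 0) :
    mu k n - mu k m =
      ((m : ℝ) ^ 2 - n ^ 2) * (k - n ^ 2 * m ^ 2 * π ^ 4) / (n ^ 2 * m ^ 2 * π ^ 2) := by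
  unfold mu
  field_simp
  ring

theorem mu_injOn {k : ℝ} (hres : ∀ i j : ℕ, 1 ≤ i → i < j → k ≠ (i : ℝ) ^ 2 * (j : ℝ) ^ 2 * π ^ 4) :
    InjOn (mu k) {n | 1 ≤ n} := by
  have key (n m : ℕ) (hn : 1 ≤ n) (hnm : n < m) : mu k n ≠ mu k m := by
    intro h
    have hsub := mu_sub_mu k (n := n) (m := m) (by omega) (by omega)
    have hnm' : (n : ℝ) ^ 2 < m ^ 2 := by gcongr
    have : (n : ℝ) ^ 2 * m ^ 2 * π ^ 2 ≠ 0 := by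
      have : (n : ℝ) ≠ 0 := by exact_mod_cast (by omega : n ≠ 0)
      have : (m : ℝ) ≠ 0 := by exact_mod_cast (by omega : m ≠ 0)
      positivity
    rw [h, sub_self, eq_comm, div_eq_zero_iff, mul_eq_zero, sub_eq_zero, sub_eq_zero] at hsub
    rcases hsub with (h | h) | h
    exacts [hnm'.ne' h, hres n m hn hnm h, this h]
  intro n hn m hm h
  rcases lt_trichotomy n m with hlt | rfl | hlt
  exacts [(key n m hn hlt h).elim, rfl, (key m n hm hlt h.symm).elim]

theorem finite_setOf_add_mu_neg {k : ℝ} (hk : 0 ≤ k) (β : ℝ) :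
    {n : ℕ | 1 ≤ n ∧ β + mu k n < 0}.Finite := by
  refine (finite_Iic ⌈-β⌉₊).subset fun n ⟨hn, hβn⟩ => ?_
  have hn' : (1 : ℝ) ≤ n := by exact_mod_cast hn
  have : 0 ≤ k / ((n : ℝ) ^ 2 * π ^ 2) := by positivity
  have : (n : ℝ) ≤ n ^ 2 * π ^ 2 :=
    calc (n : ℝ) ≤ n ^ 2 := by nlinarith
      _ ≤ n ^ 2 * π ^ 2 := le_mul_of_one_le_right (by positivity) (by nlinarith [pi_gt_three])
  exact Nat.cast_le.mp ((by unfold mu at hβn; linarith : (n : ℝ) ≤ -β).trans (Nat.le_ceil _))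

theorem ncard_insert_union_image_eq {α β : Type*} {N : Set α} (hN : N.Finite) (φ : β → ℝ)
    (s : α → ℝ) (hs : ∀ n ∈ N, 0 < s n) (hs_inj : InjOn s N) {z : β} {f g : α → β}
    (hz : φ z = 0) (hf : ∀ n ∈ N, φ (f n) = s n) (hg : ∀ n ∈ N, φ (g n) = -s n) :
    (insert z (f '' N ∪ g '' N)).ncard = 2 * N.ncard + 1 := by
  have hf_inj : InjOn f N := fun n hn m hm h =>
    hs_inj hn hm (by rw [← hf n hn, ← hf m hm, h])
  have hg_inj : InjOn g N := fun n hn m hm h =>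
    hs_inj hn hm (by rw [← neg_inj, ← hg n hn, ← hg m hm, h])
  have hdisj : Disjoint (f '' N) (g '' N) := by
    rw [disjoint_left]
    rintro _ ⟨n, hn, rfl⟩ ⟨m, hm, h⟩
    linarith [hs n hn, hs m hm, hf n hn, hg m hm, congrArg φ h]
  have hz_notMem : z ∉ f '' N ∪ g '' N := by
    rintro (⟨n, hn, h⟩ | ⟨n, hn, h⟩) <;> linarith [hs n hn, hf n hn, hg n hn, congrArg φ h]
  rw [ncard_insert_of_notMem hz_notMem ((hN.image f).union (hN.image g)),
    ncard_union_eq hdisj (hN.image f) (hN.image g), hf_inj.ncard_image, hg_inj.ncard_image]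
  ring

theorem derivWithin_sineMode_zero (c : ℝ) (n : ℕ) :
    derivWithin (sineMode c n) (Icc 0 1) 0 = c * (n * π) := by
  simpa using iteratedDerivWithin_sineMode c n 1 (by simp : (0 : ℝ) ∈ Icc 0 1)

theorem derivWithin_upos_zero (k β : ℝ) {n : ℕ} (hn : n ≠ 0) :
    derivWithin (upos k β n) (Icc 0 1) 0 = √(-2 * (β + mu k n)) := by
  have hnπ : 0 < (n : ℝ) * π := by positivity
  rw [show upos k β n = sineMode _ n from rfl, derivWithin_sineMode_zero]
  field_simp

theorem derivWithin_uneg_zero (k β : ℝ) {n : ℕ} (hn : n ≠ 0) :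
    derivWithin (uneg k β n) (Icc 0 1) 0 = -√(-2 * (β + mu k n)) := by
  have hnπ : 0 < (n : ℝ) * π := by positivity
  rw [show uneg k β n = sineMode _ n from rfl, derivWithin_sineMode_zero]
  field_simp

theorem derivWithin_IccExtend_domRestrict {a b : ℝ} (hab : a ≤ b) (f : ℝ → ℝ) {x : ℝ}
    (hx : x ∈ Icc a b) :
    derivWithin (IccExtend hab ((Icc a b).domRestrict f)) (Icc a b) x = derivWithin f (Icc a b) x :=
  derivWithin_congr (fun y hy => by simp [IccExtend_of_mem hab _ hy])
    (by simp [IccExtend_of_mem hab _ hx])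

theorem setOf_domRestrict_isStatSol {k β : ℝ} (hk : k ≠ 0)
    (hres : ∀ i j : ℕ, 1 ≤ i → i < j → k ≠ (i : ℝ) ^ 2 * (j : ℝ) ^ 2 * π ^ 4) :
    {g : Icc (0 : ℝ) 1 → ℝ | ∃ u : ℝ → ℝ, IsStatSol k β u ∧ ∀ x : Icc (0 : ℝ) 1, g x = u x} =
      insert ((Icc 0 1).domRestrict (0 : ℝ → ℝ))
        ((fun n => (Icc 0 1).domRestrict (upos k β n)) '' {n | 1 ≤ n ∧ β + mu k n < 0} ∪
          (fun n => (Icc 0 1).domRestrict (uneg k β n)) '' {n | 1 ≤ n ∧ β + mu k n < 0}) := by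
  ext g
  constructor
  · rintro ⟨u, hu, hg⟩
    obtain rfl : g = (Icc 0 1).domRestrict u := funext hg
    rcases (isStatSol_iff hk hres u).mp hu with h | ⟨n, hn, hneg, h | h⟩
    · exact Or.inl (domRestrict_eq_domRestrict_iff.mpr h)
    · exact Or.inr (Or.inl ⟨n, ⟨hn, hneg⟩, domRestrict_eq_domRestrict_iff.mpr h.symm⟩)
    · exact Or.inr (Or.inr ⟨n, ⟨hn, hneg⟩, domRestrict_eq_domRestrict_iff.mpr h.symm⟩)
  · rintro (rfl | ⟨n, ⟨hn, hneg⟩, rfl⟩ | ⟨n, ⟨hn, hneg⟩, rfl⟩)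
    · exact ⟨0, (isStatSol_iff hk hres 0).mpr (Or.inl fun _ _ => rfl), fun _ => rfl⟩
    · exact ⟨_, (isStatSol_iff hk hres _).mpr (Or.inr ⟨n, hn, hneg, Or.inl fun _ _ => rfl⟩),
        fun _ => rfl⟩
    · exact ⟨_, (isStatSol_iff hk hres _).mpr (Or.inr ⟨n, hn, hneg, Or.inr fun _ _ => rfl⟩),
        fun _ => rfl⟩

theorem stmt2_general (k β : ℝ) (hk : 0 < k)
    (hres : ∀ i j : ℕ, 1 ≤ i → i < j → k ≠ (i : ℝ)^2 * (j : ℝ)^2 * π^4) :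
    (∀ u : ℝ → ℝ, IsStatSol k β u ↔
      (EqOn u 0 (Icc (0:ℝ) 1) ∨
        ∃ n : ℕ, 1 ≤ n ∧ β + mu k n < 0 ∧
          (EqOn u (upos k β n) (Icc (0:ℝ) 1) ∨ EqOn u (uneg k β n) (Icc (0:ℝ) 1)))) ∧
    {n : ℕ | 1 ≤ n ∧ β + mu k n < 0}.Finite ∧
    {g : Icc (0:ℝ) 1 → ℝ |
        ∃ u : ℝ → ℝ, IsStatSol k β u ∧ ∀ x : Icc (0:ℝ) 1, g x = u x}.ncard
      = 2 * {n : ℕ | 1 ≤ n ∧ β + mu k n < 0}.ncard + 1 := by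
  have hfin := finite_setOf_add_mu_neg hk.le β
  refine ⟨isStatSol_iff hk.ne' hres, hfin, ?_⟩
  rw [setOf_domRestrict_isStatSol hk.ne' hres]
  -- solutions are told apart by their slope at `0`, which is `±√(-2(β + μₙ))` for `u_n^±`
  have hslope (u : ℝ → ℝ) :=
    derivWithin_IccExtend_domRestrict zero_le_one u (by simp : (0 : ℝ) ∈ Icc 0 1)
  refine ncard_insert_union_image_eq hfin
    (fun g => derivWithin (IccExtend zero_le_one g) (Icc 0 1) 0) (fun n => √(-2 * (β + mu k n)))
    (fun n hn => sqrt_pos.mpr (by linarith [hn.2])) (fun n hn m hm h => mu_injOn hres hn.1 hm.1 ?_)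
    (by simp [hslope]) (fun n hn => ?_) (fun n hn => ?_)
  · have := (sqrt_inj (by linarith [hn.2]) (by linarith [hm.2])).mp h
    linarith
  · exact (hslope _).trans (derivWithin_upos_zero k β (by have := hn.1; omega))
  · exact (hslope _).trans (derivWithin_uneg_zero k β (by have := hn.1; omega))

/-- For non-resonant `k` and `β < -β_c(k)`, the stationary solutions are exactly
the null solution and the buckled modes `u_n^±` with `β + μ_n(k) < 0`; in
particular there are exactly `2 n⋆(β) + 1` of them. -/
theorem stmt2 (k β : ℝ) (hk : 0 < k)
    (hres : ∀ i j : ℕ, 1 ≤ i → i < j → k ≠ (i : ℝ)^2 * (j : ℝ)^2 * π^4)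
    (hβ : β < -betaC k) :
    (∀ u : ℝ → ℝ, IsStatSol k β u ↔
      (EqOn u 0 (Icc (0:ℝ) 1) ∨
        ∃ n : ℕ, 1 ≤ n ∧ β + mu k n < 0 ∧
          (EqOn u (upos k β n) (Icc (0:ℝ) 1) ∨ EqOn u (uneg k β n) (Icc (0:ℝ) 1)))) ∧
    {n : ℕ | 1 ≤ n ∧ β + mu k n < 0}.Finite ∧
    {g : Icc (0:ℝ) 1 → ℝ |
        ∃ u : ℝ → ℝ, IsStatSol k β u ∧ ∀ x : Icc (0:ℝ) 1, g x = u x}.ncard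
      = 2 * {n : ℕ | 1 ≤ n ∧ β + mu k n < 0}.ncard + 1 :=
  stmt2_general k β hk hres
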